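/- In the 6-dimensional complex Zinbiel algebra Z with basis e_1,...,e_6 and nonzero products e_1² = e_5 − e_6, [e_1,e_2] = e_4 + e_5 − e_6 = [e_3,e_2], [e_1,e_3] = e_2 = [e_1,e_5] = [e_1,e_6] = −[e_3,e_1], [e_5,e_2] = e_4 = [e_6,e_2], [e_5,e_1] = −e_2 + 2e_4 = [e_6,e_1], the subspace span{e_3, e_4, e_5, e_6} is an abelian subalgebra of dimension 4, but Z has no abelian ideal of dimension 4 (so α(Z) = 4 > β(Z) = 3). -/

import Mathlib

/-!
The table extends to a unique bilinear product, and every product lies in the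
3-dimensional derived algebra `Z² = span{e₂, e₄, e₅ - e₆}`, which is an abelian ideal.

If an abelian subalgebra `S` is not contained in `span{e₃, e₄, e₅, e₆} = {x₁ = x₂ = 0}`, it
contains some `v` with `v₁ ≠ 0` or `v₂ ≠ 0`, and `[v, x] = [x, v] = 0` forces every `x ∈ S`
with `x₁ = 0` into `Z²`. So either `S ⊆ span{e₃, e₄, e₅, e₆}` or the hyperplane section
`S ∩ {x₁ = 0}` lies in `Z²`; in both cases `dim S ≤ 4`.

For `x` in an abelian ideal `B`, the products `[x, x]`, `[x, [e₅, x]]` and `[x, [e₁, x]]`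
vanish, which gives `x₁³ = 0` and `(x₃ + x₅ + x₆)² = 0`. Hence `B ⊆ {x₁ = 0}`, so `B` lies in
`Z²` or in the 3-dimensional `{x₁ = x₂ = 0, x₃ + x₅ + x₆ = 0}`.
-/

/-- Standard basis vectors of `ℂ⁶` (0-indexed: `e 0` is `e₁`, ..., `e 5` is `e₆`). -/
noncomputable def e (i : Fin 6) : Fin 6 → ℂ := Pi.single i 1

/-- Multiplication table: `T i j = [e_{i+1}, e_{j+1}]` (0-indexed). -/
noncomputable def T : Fin 6 → Fin 6 → (Fin 6 → ℂ) :=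
  ![![e 4 - e 5, e 3 + e 4 - e 5, e 1, 0, e 1, e 1],
    ![0, 0, 0, 0, 0, 0],
    ![-e 1, e 3 + e 4 - e 5, 0, 0, 0, 0],
    ![0, 0, 0, 0, 0, 0],
    ![-e 1 + (2 : ℂ) • e 3, e 3, 0, 0, 0, 0],
    ![-e 1 + (2 : ℂ) • e 3, e 3, 0, 0, 0, 0]]

/-- `A` is a subalgebra. -/
def IsSubalg {F : Type*} [Field F] {Z : Type*} [AddCommGroup Z] [Module F Z]
    (b : Z →ₗ[F] Z →ₗ[F] Z) (A : Submodule F Z) : Prop :=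
  ∀ x ∈ A, ∀ y ∈ A, b x y ∈ A

/-- `A` is abelian. -/
def IsAbelian {F : Type*} [Field F] {Z : Type*} [AddCommGroup Z] [Module F Z]
    (b : Z →ₗ[F] Z →ₗ[F] Z) (A : Submodule F Z) : Prop :=
  ∀ x ∈ A, ∀ y ∈ A, b x y = 0

/-- `A` is a two-sided ideal. -/
def IsIdeal {F : Type*} [Field F] {Z : Type*} [AddCommGroup Z] [Module F Z]
    (b : Z →ₗ[F] Z →ₗ[F] Z) (A : Submodule F Z) : Prop :=
  ∀ z : Z, ∀ x ∈ A, b z x ∈ A ∧ b x z ∈ A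

open Module Submodule

theorem Submodule.finrank_le_finrank_inf_ker_add_one {K V : Type*} [DivisionRing K]
    [AddCommGroup V] [Module K V] [FiniteDimensional K V] (f : Module.Dual K V)
    (S : Submodule K V) : finrank K S ≤ finrank K ↥(S ⊓ LinearMap.ker f) + 1 := by
  have hker : finrank K V ≤ finrank K (LinearMap.ker f) + 1 := by
    rw [← LinearMap.finrank_range_add_finrank_ker f, add_comm]
    gcongr
    simpa using (LinearMap.range f).finrank_le
  have hsup := (S ⊔ LinearMap.ker f).finrank_le
  have := finrank_sup_add_finrank_inf_eq S (LinearMap.ker f)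
  lia

theorem Submodule.finrank_le_of_le_span_range {K V : Type*} [DivisionRing K] [AddCommGroup V]
    [Module K V] {n : ℕ} (v : Fin n → V) {S : Submodule K V}
    (h : S ≤ span K (Set.range v)) : finrank K S ≤ n := by
  have : FiniteDimensional K (span K (Set.range v)) :=
    FiniteDimensional.span_of_finite K (Set.finite_range v)
  simpa using (finrank_mono h).trans (finrank_range_le_card v)

theorem IsAbelian.isSubalg {F Z : Type*} [Field F] [AddCommGroup Z] [Module F Z]
    {b : Z →ₗ[F] Z →ₗ[F] Z} {A : Submodule F Z} (hA : IsAbelian b A) : IsSubalg b A :=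
  fun x hx y hy => hA x hx y hy ▸ A.zero_mem

namespace Zinbiel6

def mul : (Fin 6 → ℂ) →ₗ[ℂ] (Fin 6 → ℂ) →ₗ[ℂ] (Fin 6 → ℂ) :=
  LinearMap.mk₂ ℂ
    (fun x y => ![0, x 0 * (y 2 + y 4 + y 5) - (x 2 + x 4 + x 5) * y 0, 0,
      (x 0 + x 2 + x 4 + x 5) * y 1 + 2 * (x 4 + x 5) * y 0,
      x 0 * y 0 + x 0 * y 1 + x 2 * y 1, -(x 0 * y 0 + x 0 * y 1 + x 2 * y 1)])
    (fun _ _ _ => by ext k; fin_cases k <;> simp <;> ring)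
    (fun _ _ _ => by ext k; fin_cases k <;> simp <;> ring)
    (fun _ _ _ => by ext k; fin_cases k <;> simp <;> ring)
    (fun _ _ _ => by ext k; fin_cases k <;> simp <;> ring)

theorem mul_apply (x y : Fin 6 → ℂ) :
    mul x y = ![0, x 0 * (y 2 + y 4 + y 5) - (x 2 + x 4 + x 5) * y 0, 0,
      (x 0 + x 2 + x 4 + x 5) * y 1 + 2 * (x 4 + x 5) * y 0,
      x 0 * y 0 + x 0 * y 1 + x 2 * y 1, -(x 0 * y 0 + x 0 * y 1 + x 2 * y 1)] :=
  rfl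

theorem eq_mul_of_table {b : (Fin 6 → ℂ) →ₗ[ℂ] (Fin 6 → ℂ) →ₗ[ℂ] (Fin 6 → ℂ)}
    (htable : ∀ i j : Fin 6, b (e i) (e j) = T i j) : b = mul := by
  refine LinearMap.ext_basis (Pi.basisFun ℂ (Fin 6)) (Pi.basisFun ℂ (Fin 6)) fun i j => ?_
  rw [Pi.basisFun_apply, Pi.basisFun_apply, ← e, ← e, htable]
  ext k
  fin_cases i <;> fin_cases j <;> fin_cases k <;> simp [T, e, mul_apply]

theorem mul_apply_eq_zero_iff {x y : Fin 6 → ℂ} :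
    mul x y = 0 ↔ x 0 * (y 2 + y 4 + y 5) - (x 2 + x 4 + x 5) * y 0 = 0 ∧
      (x 0 + x 2 + x 4 + x 5) * y 1 + 2 * (x 4 + x 5) * y 0 = 0 ∧
      x 0 * y 0 + x 0 * y 1 + x 2 * y 1 = 0 := by
  refine ⟨fun h => ⟨congrFun h 1, congrFun h 3, congrFun h 4⟩, fun ⟨h1, h3, h4⟩ => ?_⟩
  ext k
  fin_cases k <;> simp [mul_apply, h1, h3, h4]

def derived : Submodule ℂ (Fin 6 → ℂ) := span ℂ (Set.range ![e 1, e 3, e 4 - e 5])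

def maxAbelian : Submodule ℂ (Fin 6 → ℂ) := span ℂ {e 2, e 3, e 4, e 5}

theorem mem_derived_iff {x : Fin 6 → ℂ} : x ∈ derived ↔ x 0 = 0 ∧ x 2 = 0 ∧ x 4 + x 5 = 0 := by
  rw [derived, mem_span_range_iff_exists_fun]
  constructor
  · rintro ⟨c, rfl⟩
    simp [Fin.sum_univ_three, e]
  · rintro ⟨h0, h2, h45⟩
    refine ⟨![x 1, x 3, x 4], ?_⟩
    ext k
    fin_cases k <;> simp [Fin.sum_univ_three, e, h0, h2]
    linear_combination -h45

theorem mem_maxAbelian_iff {x : Fin 6 → ℂ} : x ∈ maxAbelian ↔ x 0 = 0 ∧ x 1 = 0 := by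
  simp only [maxAbelian, mem_span_insert, mem_span_singleton]
  constructor
  · rintro ⟨a, _, ⟨b, _, ⟨c, _, ⟨d, rfl⟩, rfl⟩, rfl⟩, rfl⟩
    simp [e]
  · rintro ⟨h0, h1⟩
    refine ⟨x 2, _, ⟨x 3, _, ⟨x 4, _, ⟨x 5, rfl⟩, rfl⟩, rfl⟩, ?_⟩
    ext k
    fin_cases k <;> simp [e, h0, h1]

theorem finrank_derived : finrank ℂ derived = 3 := by
  have hli : LinearIndependent ℂ ![e 1, e 3, e 4 - e 5] := by
    refine Fintype.linearIndependent_iff.mpr fun c hc i => ?_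
    have h1 := congrFun hc 1
    have h3 := congrFun hc 3
    have h4 := congrFun hc 4
    simp [Fin.sum_univ_three, e] at h1 h3 h4
    fin_cases i
    exacts [h1, h3, h4]
  rw [derived, finrank_span_eq_card hli, Fintype.card_fin]

theorem finrank_maxAbelian : finrank ℂ maxAbelian = 4 := by
  have he : e = Pi.basisFun ℂ (Fin 6) := funext fun i => (Pi.basisFun_apply ℂ (Fin 6) i).symm
  have hv : ![e 2, e 3, e 4, e 5] = e ∘ ![2, 3, 4, 5] := by
    ext i : 1
    fin_cases i <;> rfl
  have hli : LinearIndependent ℂ ![e 2, e 3, e 4, e 5] := by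
    rw [hv, he]
    exact (Pi.basisFun ℂ (Fin 6)).linearIndependent.comp _ (by decide)
  have hrange : Set.range ![e 2, e 3, e 4, e 5] = {e 2, e 3, e 4, e 5} := by
    ext
    simp only [Set.mem_range, Fin.exists_fin_succ]
    simp
    tauto
  rw [maxAbelian, ← hrange, finrank_span_eq_card hli, Fintype.card_fin]

theorem mul_mem_derived (x y : Fin 6 → ℂ) : mul x y ∈ derived := by
  simp [mem_derived_iff, mul_apply]

theorem isIdeal_derived : IsIdeal mul derived :=
  fun z x _ => ⟨mul_mem_derived z x, mul_mem_derived x z⟩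

theorem isAbelian_derived : IsAbelian mul derived := by
  intro x hx y hy
  obtain ⟨hx0, hx2, hx45⟩ := mem_derived_iff.mp hx
  obtain ⟨hy0, -, -⟩ := mem_derived_iff.mp hy
  refine mul_apply_eq_zero_iff.mpr ⟨?_, ?_, ?_⟩
  · rw [hx0, hy0]; ring
  · linear_combination y 1 * hx0 + y 1 * hx2 + y 1 * hx45 + 2 * (x 4 + x 5) * hy0
  · rw [hx0, hx2]; ring

theorem isAbelian_maxAbelian : IsAbelian mul maxAbelian := by
  intro x hx y hy
  obtain ⟨hx0, hx1⟩ := mem_maxAbelian_iff.mp hx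
  obtain ⟨hy0, hy1⟩ := mem_maxAbelian_iff.mp hy
  simp [mul_apply_eq_zero_iff, hx0, hy0, hy1]

theorem le_maxAbelian_or_mem_derived {S : Submodule ℂ (Fin 6 → ℂ)} (hS : IsAbelian mul S) :
    S ≤ maxAbelian ∨ ∀ x ∈ S, x 0 = 0 → x ∈ derived := by
  rw [or_iff_not_imp_left, SetLike.not_le_iff_exists]
  rintro ⟨v, hvS, hvD⟩ x hxS hx0
  rw [mem_maxAbelian_iff, not_and_or] at hvD
  obtain ⟨hvx, -, -⟩ := mul_apply_eq_zero_iff.mp (hS v hvS x hxS)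
  obtain ⟨-, hxv₃, hxv₄⟩ := mul_apply_eq_zero_iff.mp (hS x hxS v hvS)
  rw [hx0] at hvx hxv₃ hxv₄
  refine mem_derived_iff.mpr ⟨hx0, ?_⟩
  by_cases hv0 : v 0 = 0
  · have hv1 : v 1 ≠ 0 := hvD.resolve_left (not_not.mpr hv0)
    have hx2 : x 2 = 0 := (mul_eq_zero.mp (by linear_combination hxv₄)).resolve_right hv1
    refine ⟨hx2, (mul_eq_zero.mp (?_ : (x 4 + x 5) * v 1 = 0)).resolve_right hv1⟩
    linear_combination hxv₃ - v 1 * hx2 - 2 * (x 4 + x 5) * hv0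
  · have hs : x 2 + x 4 + x 5 = 0 := (mul_eq_zero.mp (by linear_combination hvx)).resolve_left hv0
    have h45 : x 4 + x 5 = 0 := by
      refine (mul_eq_zero.mp (?_ : (x 4 + x 5) * v 0 = 0)).resolve_right hv0
      linear_combination (hxv₃ - v 1 * hs) / 2
    exact ⟨by linear_combination hs - h45, h45⟩

theorem finrank_le_four_of_isAbelian {S : Submodule ℂ (Fin 6 → ℂ)} (hS : IsAbelian mul S) :
    finrank ℂ S ≤ 4 := by
  rcases le_maxAbelian_or_mem_derived hS with hD | hC
  · exact finrank_maxAbelian ▸ finrank_mono hD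
  · have hle : S ⊓ LinearMap.ker (LinearMap.proj 0) ≤ derived := fun x hx =>
      hC x (mem_inf.mp hx).1 (mem_inf.mp hx).2
    calc finrank ℂ S ≤ finrank ℂ ↥(S ⊓ LinearMap.ker (LinearMap.proj 0)) + 1 :=
          S.finrank_le_finrank_inf_ker_add_one _
      _ ≤ finrank ℂ derived + 1 := Nat.add_le_add_right (finrank_mono hle) 1
      _ = 4 := by rw [finrank_derived]

theorem coords_of_mem_of_isIdeal {B : Submodule ℂ (Fin 6 → ℂ)} (hI : IsIdeal mul B)
    (hA : IsAbelian mul B) {x : Fin 6 → ℂ} (hx : x ∈ B) : x 0 = 0 ∧ x 2 + x 4 + x 5 = 0 := by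
  obtain ⟨-, -, hxx₄⟩ := mul_apply_eq_zero_iff.mp (hA x hx x hx)
  have hu : x 0 * (x 0 + x 2) = 0 := by
    have := (mul_apply_eq_zero_iff.mp (hA x hx _ (hI (e 4) x hx).1)).2.2
    simp [mul_apply, e, -mul_eq_zero] at this
    linear_combination -this
  have hw : (x 0 + x 2 + x 4 + x 5) * (x 2 + x 4 + x 5) = 0 := by
    have := (mul_apply_eq_zero_iff.mp (hA x hx _ (hI (e 0) x hx).1)).2.1
    simpa [mul_apply, e, -mul_eq_zero] using this
  have hx0 : x 0 = 0 := pow_eq_zero_iff (n := 3) (by norm_num) |>.mp <| by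
    linear_combination x 0 * hxx₄ - x 1 * hu
  refine ⟨hx0, pow_eq_zero_iff (n := 2) (by norm_num) |>.mp ?_⟩
  linear_combination hw - (x 2 + x 4 + x 5) * hx0

theorem finrank_le_three_of_isIdeal {B : Submodule ℂ (Fin 6 → ℂ)} (hI : IsIdeal mul B)
    (hA : IsAbelian mul B) : finrank ℂ B ≤ 3 := by
  rcases le_maxAbelian_or_mem_derived hA with hD | hC
  · refine finrank_le_of_le_span_range ![e 3, e 4 - e 2, e 5 - e 2] fun x hx => ?_
    obtain ⟨hx0, hx1⟩ := mem_maxAbelian_iff.mp (hD hx)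
    obtain ⟨-, hs⟩ := coords_of_mem_of_isIdeal hI hA hx
    refine (mem_span_range_iff_exists_fun ℂ).mpr ⟨![x 3, x 4, x 5], ?_⟩
    ext k
    fin_cases k <;> simp [Fin.sum_univ_three, e, hx0, hx1]
    linear_combination -hs
  · exact finrank_derived ▸ finrank_mono fun x hx => hC x hx (coords_of_mem_of_isIdeal hI hA hx).1

end Zinbiel6

/-- in the 6-dimensional complex Zinbiel algebra with the above table,
`span{e₃,e₄,e₅,e₆}` is a 4-dimensional abelian subalgebra, every abelian subalgebra has
dimension at most 4, but every abelian ideal has dimension at most 3, and some abelian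
ideal has dimension 3; hence `α(Z) = 4 > β(Z) = 3`. -/
theorem stmt10 (b : (Fin 6 → ℂ) →ₗ[ℂ] (Fin 6 → ℂ) →ₗ[ℂ] (Fin 6 → ℂ))
    (htable : ∀ i j : Fin 6, b (e i) (e j) = T i j) :
    (IsSubalg b (Submodule.span ℂ {e 2, e 3, e 4, e 5}) ∧
     IsAbelian b (Submodule.span ℂ {e 2, e 3, e 4, e 5}) ∧
     Module.finrank ℂ (Submodule.span ℂ {e 2, e 3, e 4, e 5}) = 4) ∧
    (∀ S : Submodule ℂ (Fin 6 → ℂ), IsSubalg b S → IsAbelian b S →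
      Module.finrank ℂ S ≤ 4) ∧
    (∀ B : Submodule ℂ (Fin 6 → ℂ), IsIdeal b B → IsAbelian b B →
      Module.finrank ℂ B ≤ 3) ∧
    (∃ B : Submodule ℂ (Fin 6 → ℂ), IsIdeal b B ∧ IsAbelian b B ∧
      Module.finrank ℂ B = 3) := by
  obtain rfl := Zinbiel6.eq_mul_of_table htable
  exact ⟨⟨Zinbiel6.isAbelian_maxAbelian.isSubalg, Zinbiel6.isAbelian_maxAbelian,
      Zinbiel6.finrank_maxAbelian⟩,
    fun S _ hS => Zinbiel6.finrank_le_four_of_isAbelian hS,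
    fun B hI hA => Zinbiel6.finrank_le_three_of_isIdeal hI hA,
    ⟨Zinbiel6.derived, Zinbiel6.isIdeal_derived, Zinbiel6.isAbelian_derived,
      Zinbiel6.finrank_derived⟩⟩
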